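/- Let H(x₁,x₂,x₃) = x₃ + 2 + x₁ + x₂x₁ and let β₁, β₂ be positive integers. The unique critical point of H for the direction α = (β₁+β₂, β₂, β₁+β₂) is (−β₁/(β₁+β₂), β₂/β₁, −1): this point satisfies H(x) = 0 and α_j·x_i·∂_iH(x) = α_i·x_j·∂_jH(x) for all 1 ≤ i,j ≤ 3, and it is the only point of ℂ³ satisfying these equations. -/

import Mathlib

/-!
On the critical variety, `α_j y_i = α_i y_j` for `y_i = x_i ∂_iH` says that `y` is proportional
to `α`. As `α₁ = α₃`, this gives `x₁(1 + x₂) = x₃`, so `H = 0` becomes `2x₃ + 2 = 0`;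
then `x₁(1 + x₂) = -1` and `(β₁ + β₂) x₁x₂ = -β₂` are linear in `x₁` and `x₁x₂`.
-/

open MvPolynomial

theorem MvPolynomial.pderiv_ofNat {R σ : Type*} [CommSemiring R] (i : σ) (n : ℕ)
    [n.AtLeastTwo] :
    pderiv i (ofNat(n) : MvPolynomial σ R) = 0 := by
  rw [← map_ofNat C n, pderiv_C]

theorem forall_mul_eq_mul_iff_of_ne_zero {ι K : Type*} [Field K] {α y : ι → K} {k : ι}
    (hk : α k ≠ 0) : (∀ i j, α j * y i = α i * y j) ↔ ∀ i, α k * y i = α i * y k := by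
  refine ⟨fun h i => h i k, fun h i j => mul_left_cancel₀ hk ?_⟩
  linear_combination α j * h i - α i * h j

theorem basic_critical_system_iff {K : Type*} [Field K] (h2 : (2 : K) ≠ 0) {b1 b2 : K}
    (hb1 : b1 ≠ 0) (hs : b1 + b2 ≠ 0) (x0 x1 x2 : K) :
    (x2 + 2 + x0 + x1 * x0 = 0 ∧ (b1 + b2) * (x0 * (1 + x1)) = (b1 + b2) * x2 ∧
        (b1 + b2) * (x1 * x0) = b2 * x2) ↔
      x0 = -b1 / (b1 + b2) ∧ x1 = b2 / b1 ∧ x2 = -1 := by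
  constructor
  · rintro ⟨hH, h0, h1⟩
    have h0 : x0 * (1 + x1) = x2 := mul_left_cancel₀ hs h0
    have hx2 : x2 = -1 := mul_left_cancel₀ h2 (by linear_combination hH - h0)
    have hx0 : (b1 + b2) * x0 = -b1 := by linear_combination (b1 + b2) * h0 - h1 + b1 * hx2
    have hx0' : x0 = -b1 / (b1 + b2) := by rw [eq_div_iff hs]; linear_combination hx0
    refine ⟨hx0', ?_, hx2⟩
    rw [eq_div_iff hb1]
    linear_combination x1 * hx0 - h1 - b2 * hx2
  · rintro ⟨rfl, rfl, rfl⟩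
    refine ⟨?_, ?_, ?_⟩ <;> field_simp; ring

theorem basic_bivariate_critical_point_general
    (H : MvPolynomial (Fin 3) ℂ)
    (hH : H = X 2 + 2 + X 0 + X 1 * X 0)
    (b1 b2 : ℕ) (hb1 : 0 < b1)
    (α : Fin 3 → ℕ) (hα : α = ![b1 + b2, b2, b1 + b2]) :
    ∀ x : Fin 3 → ℂ,
      (eval x H = 0 ∧ ∀ i j : Fin 3,
        (α j : ℂ) * x i * eval x (pderiv i H) = (α i : ℂ) * x j * eval x (pderiv j H)) ↔
      x = ![-(b1 : ℂ) / ((b1 : ℂ) + (b2 : ℂ)), (b2 : ℂ) / (b1 : ℂ), -1] := by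
  subst hH hα
  intro x
  have hb1' : (b1 : ℂ) ≠ 0 := Nat.cast_ne_zero.2 hb1.ne'
  have hs : (b1 : ℂ) + b2 ≠ 0 := by exact_mod_cast (Nat.add_pos_left hb1 b2).ne'
  have hα2 : ((![b1 + b2, b2, b1 + b2] 2 : ℕ) : ℂ) ≠ 0 := by simpa using hs
  simp_rw [mul_assoc, forall_mul_eq_mul_iff_of_ne_zero
    (α := fun i => ((![b1 + b2, b2, b1 + b2] i : ℕ) : ℂ)) hα2]
  have hH : eval x (X 2 + 2 + X 0 + X 1 * X 0) = x 2 + 2 + x 0 + x 1 * x 0 := by simp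
  have hd0 : eval x (pderiv 0 (X 2 + 2 + X 0 + X 1 * X 0)) = 1 + x 1 := by
    simp [pderiv_X, pderiv_ofNat, add_comm]
  have hd1 : eval x (pderiv 1 (X 2 + 2 + X 0 + X 1 * X 0)) = x 0 := by
    simp [pderiv_X, pderiv_ofNat]
  have hd2 : eval x (pderiv 2 (X 2 + 2 + X 0 + X 1 * X 0)) = 1 := by
    simp [pderiv_X, pderiv_ofNat]
  simp only [Fin.forall_fin_succ, Fin.succ_zero_eq_one, Fin.succ_one_eq_two, IsEmpty.forall_iff,
    and_true, hH, hd0, hd1, hd2, mul_one, Matrix.cons_val, Nat.cast_add]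
  rw [basic_critical_system_iff two_ne_zero hb1' hs]
  simp only [funext_iff, Fin.forall_fin_succ, Fin.succ_zero_eq_one, Fin.succ_one_eq_two,
    IsEmpty.forall_iff, and_true, Matrix.cons_val]

/-- `(-β₁/(β₁+β₂), β₂/β₁, -1)` is the unique critical point of
`H(x₁,x₂,x₃) = x₃ + 2 + x₁ + x₂x₁` for the direction `α = (β₁+β₂, β₂, β₁+β₂)`. -/
theorem basic_bivariate_critical_point
    (H : MvPolynomial (Fin 3) ℂ)
    (hH : H = X 2 + 2 + X 0 + X 1 * X 0)
    (b1 b2 : ℕ) (hb1 : 0 < b1) (hb2 : 0 < b2)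
    (α : Fin 3 → ℕ) (hα : α = ![b1 + b2, b2, b1 + b2]) :
    ∀ x : Fin 3 → ℂ,
      (eval x H = 0 ∧ ∀ i j : Fin 3,
        (α j : ℂ) * x i * eval x (pderiv i H) = (α i : ℂ) * x j * eval x (pderiv j H)) ↔
      x = ![-(b1 : ℂ) / ((b1 : ℂ) + (b2 : ℂ)), (b2 : ℂ) / (b1 : ℂ), -1] :=
  basic_bivariate_critical_point_general H hH b1 b2 hb1 α hα
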